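/- Let X_1,...,X_n be n real-valued (possibly dependent) random variables with order statistics X_{1:n} ≤ ... ≤ X_{n:n}, and suppose Assumption C holds: the distribution function of X_{n:n} is both long-tailed and dominatedly varying (X_{n:n} ∈ 𝓛 ∩ 𝓓), and there exists a dominatedly varying function h ∈ 𝓗_{X_{n:n}} such that condition (DS1) holds for every t > 0. Then for any 0 < a ≤ b < ∞ and 0 ≤ d < ∞, the relation P(∑_{i=0}^{n-1} c_i X_{n-i:n} > x) ~ P(c_0 X_{n:n} > x) ~ ∑_{i=1}^{n} P(c_0 X_i > x) as x → ∞ holds uniformly for (c_0, c_1, ..., c_{n-1}) ∈ [a,b] × [0,d]^{n-1}. -/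

import Mathlib

open MeasureTheory Filter Topology Asymptotics

noncomputable section

/-- Tail probability `P(Y > x)` of a real random variable. -/
def tailP {Ω : Type*} [MeasurableSpace Ω] (μ : Measure Ω) (Y : Ω → ℝ) (x : ℝ) : ℝ :=
  (μ {ω | x < Y ω}).toReal

/-- The maximum `X_{n:n}` of finitely many random variables. -/
def maxRV {Ω : Type*} {n : ℕ} (X : Fin n → Ω → ℝ) (ω : Ω) : ℝ := ⨆ i, X i ω

/-- The `i`-th largest value (descending order statistic, `0`-indexed):
`ordDesc X i = X_{n-i:n}`. -/
def ordDesc {Ω : Type*} {n : ℕ} (X : Fin n → Ω → ℝ) (i : Fin n) (ω : Ω) : ℝ :=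
  (((List.ofFn fun j => X j ω).mergeSort fun a b => decide (b ≤ a)).getD i 0)

/-- A tail function `T = 1 - F` is long-tailed (`F ∈ 𝓛`). -/
def LongTailedT (T : ℝ → ℝ) : Prop :=
  (∀ x : ℝ, 0 ≤ x → 0 < T x) ∧
  ∀ y : ℝ, Tendsto (fun x => T (x + y) / T x) atTop (𝓝 1)

/-- A function is dominatedly varying. -/
def DomVarFun (h : ℝ → ℝ) : Prop :=
  ∀ y : ℝ, 0 < y →
    (0 : EReal) < atTop.liminf (fun x => ((h (x * y) / h x : ℝ) : EReal)) ∧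
    atTop.limsup (fun x => ((h (x * y) / h x : ℝ) : EReal)) < ⊤

/-- A function is weakly self-neglecting. -/
def WeaklySelfNeg (h : ℝ → ℝ) : Prop :=
  ∀ y : ℝ, atTop.limsup (fun x => ((h (x + y * h x) / h x : ℝ) : EReal)) < ⊤

/-- `h ∈ 𝓗_F` where `T = 1 - F` is the tail of `F`. -/
def MemScaleClass (T h : ℝ → ℝ) : Prop :=
  (∀ᶠ x in atTop, 0 < h x) ∧
  (h =o[atTop] fun x : ℝ => x) ∧
  (∀ y : ℝ, Tendsto (fun x => T (x + y * h x) / T x) atTop (𝓝 1)) ∧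
  WeaklySelfNeg h

/-- Upper endpoint `x_F = sup {x : F(x) < 1}` of a distribution with tail `T = 1 - F`. -/
def upEnd (T : ℝ → ℝ) : EReal := sSup ((fun x : ℝ => (x : EReal)) '' {x | 0 < T x})

open Classical in
/-- The filter of "`x → x_F`". -/
def endFilter (T : ℝ → ℝ) : Filter ℝ :=
  if upEnd T = ⊤ then atTop else 𝓝[<] (upEnd T).toReal

/-- `F ∈ GMDA(h)` for `T = 1 - F`. -/
def MemGMDA (T h : ℝ → ℝ) : Prop :=
  (∀ x, 0 < h x) ∧
  ∀ y : ℝ, Tendsto (fun x => T (x + y * h x) / T x) (endFilter T) (𝓝 (Real.exp (-y)))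

/-- Condition (DS1) (for all `t > 0`). -/
def DS1 {Ω : Type*} [MeasurableSpace Ω] (μ : Measure Ω) {n : ℕ} (X : Fin n → Ω → ℝ)
    (h : ℝ → ℝ) : Prop :=
  ∀ t : ℝ, 0 < t → ∀ i j : Fin n, i ≠ j →
    Tendsto (fun x => (μ {ω | t * h x < |X i ω| ∧ x < X j ω}).toReal / tailP μ (maxRV X) x)
      atTop (𝓝 0)

/-- Condition (DS2) for a given `L > 0`. -/
def DS2 {Ω : Type*} [MeasurableSpace Ω] (μ : Measure Ω) {n : ℕ} (X : Fin n → Ω → ℝ)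
    (h : ℝ → ℝ) (L : ℝ) : Prop :=
  ∀ i j : Fin n, i < j →
    Tendsto (fun x => (μ {ω | L * h x < X i ω ∧ L * h x < X j ω}).toReal / tailP μ (maxRV X) x)
      atTop (𝓝 0)

/-- Condition (v1). -/
def CondV1 {Ω : Type*} [MeasurableSpace Ω] (μ : Measure Ω) {n : ℕ} (X : Fin n → Ω → ℝ) : Prop :=
  ∀ i j : Fin n, i < j →
    Tendsto (fun x => (μ {ω | x < X i ω ∧ x < X j ω}).toReal / tailP μ (maxRV X) x)
      atTop (𝓝 0)

/-- Assumption A: `X_{n:n}` has an infinite upper endpoint, `X_{n:n} ∈ GMDA(h)`,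
(DS1) holds for all `t > 0` and (DS2) for some `L > 0`. -/
def AssumptionA {Ω : Type*} [MeasurableSpace Ω] (μ : Measure Ω) {n : ℕ}
    (X : Fin n → Ω → ℝ) : Prop :=
  ∃ h : ℝ → ℝ,
    (∀ x : ℝ, 0 < tailP μ (maxRV X) x) ∧
    MemGMDA (tailP μ (maxRV X)) h ∧
    DS1 μ X h ∧ ∃ L : ℝ, 0 < L ∧ DS2 μ X h L

/-- Assumption B: `X_{n:n} ∈ 𝓛` and some `h ∈ 𝓗_{X_{n:n}}` satisfies (DS1) for all `t > 0`
and (DS2) for some `L > 0`. -/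
def AssumptionB {Ω : Type*} [MeasurableSpace Ω] (μ : Measure Ω) {n : ℕ}
    (X : Fin n → Ω → ℝ) : Prop :=
  LongTailedT (tailP μ (maxRV X)) ∧
  ∃ h : ℝ → ℝ, MemScaleClass (tailP μ (maxRV X)) h ∧
    DS1 μ X h ∧ ∃ L : ℝ, 0 < L ∧ DS2 μ X h L

/-- Assumption C: `X_{n:n} ∈ 𝓛 ∩ 𝓓` and some dominatedly varying `h ∈ 𝓗_{X_{n:n}}`
satisfies (DS1) for all `t > 0`. -/
def AssumptionC {Ω : Type*} [MeasurableSpace Ω] (μ : Measure Ω) {n : ℕ}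
    (X : Fin n → Ω → ℝ) : Prop :=
  LongTailedT (tailP μ (maxRV X)) ∧ DomVarFun (tailP μ (maxRV X)) ∧
  ∃ h : ℝ → ℝ, DomVarFun h ∧ MemScaleClass (tailP μ (maxRV X)) h ∧ DS1 μ X h

/-- The uniform (in the weights `c ∈ K`) max-sum asymptotic equivalence (max-sum0):
`P(∑ c_i X_{n-i:n} > x) ~ P(c_0 X_{n:n} > x) ~ ∑ P(c_0 X_i > x)` uniformly on `K`. -/
def UnifMaxSum {Ω : Type*} [MeasurableSpace Ω] (μ : Measure Ω) {n : ℕ} [NeZero n]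
    (X : Fin n → Ω → ℝ) (K : Set (Fin n → ℝ)) : Prop :=
  TendstoUniformlyOn
    (fun x (c : Fin n → ℝ) =>
      tailP μ (fun ω => ∑ i, c i * ordDesc X i ω) x /
        tailP μ (fun ω => c 0 * maxRV X ω) x) 1 atTop K ∧
  TendstoUniformlyOn
    (fun x (c : Fin n → ℝ) =>
      tailP μ (fun ω => c 0 * maxRV X ω) x /
        ∑ i, tailP μ (fun ω => c 0 * X i ω) x) 1 atTop K

end

/-!
Put `u = x / c 0`. Off the event that one coordinate exceeds a level of order `u` while another
exceeds `h u` in absolute value, an event of probability `o(P(X_{n:n} > u))` by (DS1), at most one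
coordinate is large, so every order statistic but the top one is `O(h u)` and the weighted sum is
`c 0 * X_{n:n} + O(h u)`. Since `h ∈ 𝓗_{X_{n:n}}`, shifting `u` by a multiple of `h u` does not
change `P(X_{n:n} > u)` asymptotically. In the upper bound the weighted sum exceeding `c 0 * u` only
forces `X_{n:n} > κ u` for a fixed `κ > 0`; dominated variation of `h` and of the tail of
`X_{n:n}` brings (DS1) from level `κ u` back to level `u`. The comparison of `P(X_{n:n} > u)` with
`∑ P(X_i > u)` is Bonferroni's inequality together with (DS1). All bounds depend on the weights only
through `c 0 ∈ [a, b]`, which makes them uniform.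
-/

section OrderStatistics

variable {Ω : Type*} {n : ℕ} (X : Fin n → Ω → ℝ) (ω : Ω)

noncomputable def descList : List ℝ := (List.ofFn fun j => X j ω).mergeSort fun a b => decide (b ≤ a)

theorem descList_perm : (descList X ω).Perm (List.ofFn fun j => X j ω) :=
  List.mergeSort_perm _ _

theorem length_descList : (descList X ω).length = n := by
  simp [descList]

theorem pairwise_descList : (descList X ω).Pairwise fun a b => b ≤ a := by
  simpa [descList] using List.pairwise_mergeSort (le := fun a b : ℝ => decide (b ≤ a))
    (fun a b c hab hbc => by simp only [decide_eq_true_eq] at *; exact hbc.trans hab)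
    (fun a b => by simp [le_total]) (List.ofFn fun j => X j ω)

theorem ordDesc_eq_getElem (i : Fin n) :
    ordDesc X i ω = (descList X ω)[(i : ℕ)]'((length_descList X ω).symm ▸ i.2) :=
  List.getD_eq_getElem _ _ _

theorem exists_eq_ordDesc (i : Fin n) : ∃ j, X j ω = ordDesc X i ω := by
  rw [← List.mem_ofFn, ← (descList_perm X ω).mem_iff, ordDesc_eq_getElem]
  exact List.getElem_mem _

theorem exists_ordDesc_eq (j : Fin n) : ∃ i, ordDesc X i ω = X j ω := by
  obtain ⟨i, hi, hij⟩ := List.mem_iff_getElem.mp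
    ((descList_perm X ω).mem_iff.mpr (List.mem_ofFn.mpr ⟨j, rfl⟩))
  exact ⟨⟨i, length_descList X ω ▸ hi⟩, by rw [ordDesc_eq_getElem, ← hij]⟩

theorem ordDesc_antitone : Antitone fun i => ordDesc X i ω := by
  intro i k hik
  rcases hik.eq_or_lt with rfl | hlt
  · exact le_rfl
  · simp only [ordDesc_eq_getElem]
    exact List.pairwise_iff_getElem.mp (pairwise_descList X ω) _ _ _ _ hlt

theorem ordDesc_zero [NeZero n] : ordDesc X 0 ω = maxRV X ω := by
  have hbdd : BddAbove (Set.range fun j => X j ω) := (Set.finite_range _).bddAbove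
  obtain ⟨j, hj⟩ := exists_eq_ordDesc X ω 0
  refine le_antisymm (hj ▸ le_ciSup hbdd j) (ciSup_le fun k => ?_)
  obtain ⟨i, hi⟩ := exists_ordDesc_eq X ω k
  exact hi ▸ ordDesc_antitone X ω (Fin.zero_le i)

theorem ordDesc_le_maxRV [NeZero n] (i : Fin n) : ordDesc X i ω ≤ maxRV X ω :=
  ordDesc_zero X ω ▸ ordDesc_antitone X ω (Fin.zero_le i)

theorem ordDesc_le_of_card_le {β : ℝ} {i : Fin n}
    (hcard : (Finset.univ.filter fun j => β < X j ω).card ≤ i) : ordDesc X i ω ≤ β := by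
  by_contra! hlt
  have hcount : (descList X ω).countP (fun v => decide (β < v)) =
      (Finset.univ.filter fun j => β < X j ω).card := by
    rw [(descList_perm X ω).countP_eq, ← Multiset.coe_countP, ← Fin.univ_val_map,
      Multiset.countP_map, Finset.card_def, Finset.filter_val]
  have hfirst : ∀ v ∈ (descList X ω).take (i + 1), β < v := by
    intro v hv
    obtain ⟨k, hk, rfl⟩ := List.mem_iff_getElem.mp hv
    simp only [List.length_take, List.getElem_take] at hk ⊢
    have := ordDesc_antitone X ω (Fin.mk_le_of_le_val (by omega) : (⟨k, by omega⟩ : Fin n) ≤ i)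
    simp only [ordDesc_eq_getElem] at this hlt
    exact hlt.trans_le this
  have htake : ((descList X ω).take (i + 1)).countP (fun v => decide (β < v)) = i + 1 := by
    rw [List.countP_eq_length.mpr (by simpa using hfirst), List.length_take, length_descList]
    omega
  have := (List.take_sublist (i + 1) (descList X ω)).countP_le (p := fun v => decide (β < v))
  omega

end OrderStatistics

section WeightedSum

variable {Ω : Type*} {n : ℕ} [NeZero n] (X : Fin n → Ω → ℝ) (ω : Ω) {c : Fin n → ℝ} {d : ℝ}

theorem sum_erase_zero_mul_le (hd : 0 ≤ d) (hc : ∀ i, i ≠ 0 → c i ∈ Set.Icc 0 d)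
    {r : Fin n → ℝ} {γ : ℝ} (hγ : 0 ≤ γ) (hr : ∀ i, i ≠ 0 → r i ≤ γ) :
    ∑ i ∈ Finset.univ.erase 0, c i * r i ≤ n * d * γ := by
  have hterm : ∀ i ∈ Finset.univ.erase (0 : Fin n), c i * r i ≤ d * γ := fun i hi => by
    have hi := Finset.ne_of_mem_erase hi
    exact (mul_le_mul_of_nonneg_left (hr i hi) (hc i hi).1).trans
      (mul_le_mul_of_nonneg_right (hc i hi).2 hγ)
  have hcard : ((Finset.univ.erase (0 : Fin n)).card : ℝ) ≤ n := by
    exact_mod_cast (Finset.card_erase_le).trans_eq (Finset.card_fin n)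
  calc ∑ i ∈ Finset.univ.erase 0, c i * r i
      ≤ (Finset.univ.erase (0 : Fin n)).card • (d * γ) := Finset.sum_le_card_nsmul _ _ _ hterm
    _ ≤ n * d * γ := by
      rw [nsmul_eq_mul, mul_assoc]
      exact mul_le_mul_of_nonneg_right hcard (by positivity)

theorem sum_mul_ordDesc_le (hd : 0 ≤ d) (hc : ∀ i, i ≠ 0 → c i ∈ Set.Icc 0 d) {β : ℝ}
    (hβ : 0 ≤ β) (hX : ∀ i, i ≠ 0 → ordDesc X i ω ≤ β) :
    ∑ i, c i * ordDesc X i ω ≤ c 0 * maxRV X ω + n * d * β := by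
  rw [← Finset.add_sum_erase _ _ (Finset.mem_univ 0), ordDesc_zero]
  linarith [sum_erase_zero_mul_le hd hc hβ hX]

theorem le_sum_mul_ordDesc (hd : 0 ≤ d) (hc : ∀ i, i ≠ 0 → c i ∈ Set.Icc 0 d) {β : ℝ}
    (hβ : 0 ≤ β) (hX : ∀ i, i ≠ 0 → -β ≤ ordDesc X i ω) :
    c 0 * maxRV X ω - n * d * β ≤ ∑ i, c i * ordDesc X i ω := by
  rw [← Finset.add_sum_erase _ _ (Finset.mem_univ 0), ordDesc_zero]
  have := sum_erase_zero_mul_le hd hc hβ (r := fun i => -ordDesc X i ω)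
    fun i hi => neg_le.mp (hX i hi)
  simp only [mul_neg, Finset.sum_neg_distrib] at this
  linarith

theorem sum_mul_ordDesc_le_mul_max (hd : 0 ≤ d) (hc : ∀ i, i ≠ 0 → c i ∈ Set.Icc 0 d)
    (hc0 : 0 ≤ c 0) :
    ∑ i, c i * ordDesc X i ω ≤ (c 0 + n * d) * max (maxRV X ω) 0 := by
  have := sum_mul_ordDesc_le X ω hd hc (le_max_right _ 0)
    fun i _ => (ordDesc_le_maxRV X ω i).trans (le_max_left _ 0)
  nlinarith [mul_le_mul_of_nonneg_left (le_max_left (maxRV X ω) 0) hc0]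

variable {a b u β : ℝ}

theorem sub_lt_maxRV_or_exists_of_mul_lt_sum (ha : 0 < a) (hc0 : c 0 ∈ Set.Icc a b)
    (hd : 0 ≤ d) (hc : ∀ i, i ≠ 0 → c i ∈ Set.Icc 0 d) (hu : 0 < u) (hβ : 0 ≤ β)
    (hsum : c 0 * u < ∑ i, c i * ordDesc X i ω) :
    u - n * d / a * β < maxRV X ω ∨ ∃ p ∈ (Finset.univ.offDiag : Finset (Fin n × Fin n)),
      β < |X p.1 ω| ∧ a / (b + n * d) * u < X p.2 ω := by
  have hc0pos : 0 < c 0 := ha.trans_le hc0.1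
  by_cases hcard : (Finset.univ.filter fun j => β < X j ω).card ≤ 1
  · left
    have hle := sum_mul_ordDesc_le X ω hd hc hβ fun i hi =>
      ordDesc_le_of_card_le X ω (hcard.trans (Fin.pos_iff_ne_zero.mpr hi))
    have hD : n * d * β / c 0 ≤ n * d / a * β := by
      rw [div_mul_eq_mul_div]
      exact div_le_div_of_nonneg_left (by positivity) ha hc0.1
    have : u - maxRV X ω < n * d * β / c 0 := by
      rw [lt_div_iff₀ hc0pos]
      linarith
    linarith
  · right
    obtain ⟨j, hj, k, hk, hjk⟩ := Finset.one_lt_card.mp (not_le.mp hcard)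
    simp only [Finset.mem_filter, Finset.mem_univ, true_and] at hj hk
    have hbnd : 0 < b + n * d := by
      have : 0 ≤ (n : ℝ) * d := by positivity
      linarith [hc0.1.trans hc0.2]
    have hmax : a / (b + n * d) * u < maxRV X ω := by
      have hW := sum_mul_ordDesc_le_mul_max X ω hd hc hc0pos.le
      have hmax0 : a / (b + n * d) * u < max (maxRV X ω) 0 := by
        rw [div_mul_eq_mul_div, div_lt_iff₀ hbnd]
        nlinarith [mul_le_mul_of_nonneg_right hc0.1 hu.le,
          mul_le_mul_of_nonneg_right hc0.2 (le_max_right (maxRV X ω) 0)]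
      exact (lt_max_iff.mp hmax0).resolve_right (not_lt.mpr (by positivity))
    obtain ⟨l, hl⟩ := exists_lt_of_lt_ciSup hmax
    obtain ⟨i, hil, hi⟩ : ∃ i, i ≠ l ∧ β < X i ω := by
      by_cases hjl : j = l
      · exact ⟨k, fun hkl => hjk (hjl.trans hkl.symm), hk⟩
      · exact ⟨j, hjl, hj⟩
    exact ⟨(i, l), Finset.mem_offDiag.mpr ⟨Finset.mem_univ _, Finset.mem_univ _, hil⟩,
      hi.trans_le (le_abs_self _), hl⟩

theorem mul_lt_sum_or_exists_of_add_lt_maxRV (ha : 0 < a) (hc0 : a ≤ c 0)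
    (hd : 0 ≤ d) (hc : ∀ i, i ≠ 0 → c i ∈ Set.Icc 0 d) (hu : 0 ≤ u) (hβ : 0 ≤ β)
    (hmax : u + n * d / a * β < maxRV X ω) :
    c 0 * u < ∑ i, c i * ordDesc X i ω ∨ ∃ p ∈ (Finset.univ.offDiag : Finset (Fin n × Fin n)),
      β < |X p.1 ω| ∧ u < X p.2 ω := by
  by_cases hpair : ∃ p ∈ (Finset.univ.offDiag : Finset (Fin n × Fin n)),
      β < |X p.1 ω| ∧ u < X p.2 ω
  · exact Or.inr hpair
  left
  obtain ⟨l, hl⟩ := exists_lt_of_lt_ciSup hmax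
  have hDβ : 0 ≤ n * d / a * β := by positivity
  have hlow : ∀ j, -β ≤ X j ω := by
    intro j
    by_cases hjl : j = l
    · subst hjl; linarith
    · refine (neg_abs_le _).trans' (neg_le_neg (not_lt.mp fun hj => hpair ⟨(j, l), ?_, hj, ?_⟩))
      · exact Finset.mem_offDiag.mpr ⟨Finset.mem_univ _, Finset.mem_univ _, hjl⟩
      · linarith
  have hle := le_sum_mul_ordDesc X ω hd hc hβ fun i _ => by
    obtain ⟨j, hj⟩ := exists_eq_ordDesc X ω i
    exact hj ▸ hlow j
  have hD : n * d * β ≤ c 0 * (n * d / a * β) := by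
    rw [show c 0 * (n * d / a * β) = c 0 / a * (n * d * β) by ring]
    exact le_mul_of_one_le_left (by positivity) ((one_le_div ha).mpr hc0)
  nlinarith [mul_lt_mul_of_pos_left hmax (ha.trans_le hc0)]

end WeightedSum

theorem setOf_lt_maxRV {Ω : Type*} {n : ℕ} [NeZero n] (X : Fin n → Ω → ℝ) (u : ℝ) :
    {ω | u < maxRV X ω} = ⋃ i, {ω | u < X i ω} := by
  ext ω
  simp only [maxRV, Set.mem_iUnion, Set.mem_ofPred]
  exact ⟨exists_lt_of_lt_ciSup, fun ⟨i, hi⟩ =>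
    hi.trans_le (le_ciSup (Set.finite_range fun k => X k ω).bddAbove i)⟩

section Tails

variable {Ω : Type*} [MeasurableSpace Ω] {μ : Measure Ω}

theorem measureReal_le_add_sum [IsFiniteMeasure μ] {ι : Type*} {A B : Set Ω} {E : ι → Set Ω}
    (s : Finset ι) (hA : A ⊆ B ∪ ⋃ i ∈ s, E i) : μ.real A ≤ μ.real B + ∑ i ∈ s, μ.real (E i) :=
  (measureReal_mono hA).trans <| (measureReal_union_le _ _).trans <|
    add_le_add_right (measureReal_biUnion_finset_le _ _) _

/-- Bonferroni's inequality. -/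
theorem sum_measureReal_le_measureReal_biUnion_add [IsFiniteMeasure μ] {ι : Type*}
    [DecidableEq ι] {A : ι → Set Ω} (hA : ∀ i, MeasurableSet (A i)) (s : Finset ι) :
    ∑ i ∈ s, μ.real (A i) ≤
      μ.real (⋃ i ∈ s, A i) + ∑ p ∈ s.offDiag, μ.real (A p.1 ∩ A p.2) := by
  set B : ι → Set Ω := fun i => A i \ ⋃ j ∈ s.erase i, A j
  have hsplit : ∀ i ∈ s, μ.real (A i) ≤ μ.real (B i) + ∑ j ∈ s.erase i, μ.real (A i ∩ A j) :=
    fun i _ => measureReal_le_add_sum _ fun ω hω => by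
      by_cases h : ω ∈ ⋃ j ∈ s.erase i, A j
      · simp only [Set.mem_iUnion] at h
        obtain ⟨j, hj, hωj⟩ := h
        exact Or.inr (Set.mem_biUnion hj ⟨hω, hωj⟩)
      · exact Or.inl ⟨hω, h⟩
  have hdisj : (s : Set ι).PairwiseDisjoint B := fun i hi j hj hij =>
    Set.disjoint_left.mpr fun ω hωi hωj =>
      hωi.2 (Set.mem_biUnion (Finset.mem_erase.mpr ⟨hij.symm, hj⟩) hωj.1)
  have hB : ∑ i ∈ s, μ.real (B i) ≤ μ.real (⋃ i ∈ s, A i) := by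
    rw [← measureReal_biUnion_finset hdisj fun i _ =>
      (hA i).diff (Finset.measurableSet_biUnion _ fun j _ => hA j)]
    exact measureReal_mono (Set.biUnion_mono subset_rfl fun i _ => Set.sdiff_subset)
      (measure_ne_top _ _)
  have hpairs : ∑ p ∈ s.offDiag, μ.real (A p.1 ∩ A p.2) =
      ∑ i ∈ s, ∑ j ∈ s.erase i, μ.real (A i ∩ A j) :=
    Finset.sum_finset_product _ _ _ fun p => by
      simp only [Finset.mem_offDiag, Finset.mem_erase]
      tauto
  calc ∑ i ∈ s, μ.real (A i)
      ≤ ∑ i ∈ s, (μ.real (B i) + ∑ j ∈ s.erase i, μ.real (A i ∩ A j)) :=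
        Finset.sum_le_sum hsplit
    _ ≤ _ := by rw [Finset.sum_add_distrib, hpairs]; exact add_le_add_left hB _

theorem tailP_antitone [IsFiniteMeasure μ] (Y : Ω → ℝ) : Antitone (tailP μ Y) :=
  fun _ _ hxy => measureReal_mono fun _ hω => hxy.trans_lt hω

theorem tailP_pos_of_forall_nonneg [IsFiniteMeasure μ] {Y : Ω → ℝ}
    (hY : ∀ x, 0 ≤ x → 0 < tailP μ Y x) (x : ℝ) : 0 < tailP μ Y x := by
  rcases le_total 0 x with hx | hx
  · exact hY x hx
  · exact (hY 0 le_rfl).trans_le (tailP_antitone Y hx)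

theorem tailP_const_mul (Y : Ω → ℝ) {c : ℝ} (hc : 0 < c) (u : ℝ) :
    tailP μ (fun ω => c * Y ω) (c * u) = tailP μ Y u := by
  simp only [tailP, mul_lt_mul_iff_right₀ hc]

end Tails

theorem DomVarFun.exists_pos_mul_le {f : ℝ → ℝ} (hf : DomVarFun f) (hpos : ∀ᶠ x in atTop, 0 < f x)
    {y : ℝ} (hy : 0 < y) : ∃ m, 0 < m ∧ ∀ᶠ x in atTop, m * f x ≤ f (x * y) := by
  obtain ⟨m, hm0, hm⟩ := exists_between (hf y hy).1
  lift m to ℝ using ⟨(hm.trans_le le_top).ne, (hm0.trans' (EReal.bot_lt_zero)).ne'⟩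
  refine ⟨m, EReal.coe_pos.mp hm0, ?_⟩
  filter_upwards [eventually_lt_of_lt_liminf hm, hpos] with x hx hfx
  exact ((lt_div_iff₀ hfx).mp (EReal.coe_lt_coe_iff.mp hx)).le

section PairTail

variable {Ω : Type*} [MeasurableSpace Ω] {μ : Measure Ω} {n : ℕ} {X : Fin n → Ω → ℝ}

noncomputable def pairTail (μ : Measure Ω) (X : Fin n → Ω → ℝ) (s w : ℝ) : ℝ :=
  ∑ p ∈ (Finset.univ.offDiag : Finset (Fin n × Fin n)), μ.real {ω | s < |X p.1 ω| ∧ w < X p.2 ω}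

theorem pairTail_nonneg (s w : ℝ) : 0 ≤ pairTail μ X s w :=
  Finset.sum_nonneg fun _ _ => measureReal_nonneg

theorem pairTail_le_of_le [IsFiniteMeasure μ] {s s' : ℝ} (hs : s ≤ s') (w : ℝ) :
    pairTail μ X s' w ≤ pairTail μ X s w :=
  Finset.sum_le_sum fun _ _ => measureReal_mono fun _ hω => ⟨hs.trans_lt hω.1, hω.2⟩

theorem measureReal_le_add_pairTail [IsFiniteMeasure μ] {A B : Set Ω} {s w : ℝ}
    (hA : ∀ ω ∈ A, ω ∈ B ∨ ∃ p ∈ (Finset.univ.offDiag : Finset (Fin n × Fin n)),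
      s < |X p.1 ω| ∧ w < X p.2 ω) :
    μ.real A ≤ μ.real B + pairTail μ X s w :=
  measureReal_le_add_sum _ fun ω hω => (hA ω hω).imp_right fun ⟨_, hp, hωp⟩ =>
    Set.mem_biUnion hp hωp

variable {h : ℝ → ℝ}

theorem DS1.tendsto_pairTail_div (hDS1 : DS1 μ X h) {t : ℝ} (ht : 0 < t) :
    Tendsto (fun w => pairTail μ X (t * h w) w / tailP μ (maxRV X) w) atTop (𝓝 0) := by
  simp only [pairTail, Finset.sum_div, measureReal_def]
  simpa using tendsto_finsetSum _ fun p hp =>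
    hDS1 t ht p.1 p.2 (Finset.mem_offDiag.mp hp).2.2

/-- Dominated variation of `h` and of the tail of the maximum lets (DS1) at level `κ u`
control the joint exceedances at level `u`. -/
theorem DS1.tendsto_pairTail_const_mul_div [IsFiniteMeasure μ] (hDS1 : DS1 μ X h)
    (hhD : DomVarFun h) (hh : ∀ᶠ x in atTop, 0 < h x) (hTD : DomVarFun (tailP μ (maxRV X)))
    (hT : ∀ x, 0 < tailP μ (maxRV X) x) {κ : ℝ} (hκ : 0 < κ) :
    Tendsto (fun u => pairTail μ X (h u) (κ * u) / tailP μ (maxRV X) u) atTop (𝓝 0) := by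
  set T := tailP μ (maxRV X)
  have hκu : Tendsto (fun u => κ * u) atTop atTop := tendsto_id.const_mul_atTop hκ
  have hscale : ∀ u, κ * u * κ⁻¹ = u := fun u => by field_simp
  obtain ⟨m, hm, hmh⟩ := hhD.exists_pos_mul_le hh (inv_pos.mpr hκ)
  obtain ⟨m', hm', hmT⟩ := hTD.exists_pos_mul_le (.of_forall hT) (inv_pos.mpr hκ)
  have hbound := ((hDS1.tendsto_pairTail_div hm).comp hκu).div_const m'
  rw [zero_div] at hbound
  refine tendsto_of_tendsto_of_tendsto_of_le_of_le' tendsto_const_nhds hbound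
    (.of_forall fun u => div_nonneg (pairTail_nonneg _ _) (hT u).le) ?_
  filter_upwards [hκu.eventually hmh, hκu.eventually hmT] with u hhu hTu
  rw [hscale] at hhu hTu
  rw [Function.comp_apply, div_div, mul_comm (T _)]
  exact div_le_div₀ (pairTail_nonneg _ _) (pairTail_le_of_le hhu _)
    (mul_pos hm' (hT _)) hTu

theorem DS1.tendsto_tailP_maxRV_div_sum [IsFiniteMeasure μ] [NeZero n] (hDS1 : DS1 μ X h)
    (hXm : ∀ i, Measurable (X i)) (hT : ∀ x, 0 < tailP μ (maxRV X) x)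
    (hho : h =o[atTop] fun x : ℝ => x) :
    Tendsto (fun u => tailP μ (maxRV X) u / ∑ i, tailP μ (X i) u) atTop (𝓝 1) := by
  set T := tailP μ (maxRV X)
  set S := fun u => ∑ i, tailP μ (X i) u
  have hTS : ∀ u, T u ≤ S u := fun u => by
    simpa only [S, T, tailP, measureReal_def, setOf_lt_maxRV] using
      measureReal_iUnion_fintype_le (μ := μ) fun i => {ω | u < X i ω}
  have hST : ∀ᶠ u in atTop, S u ≤ T u + pairTail μ X (1 * h u) u := by
    filter_upwards [hho.bound one_pos, eventually_ge_atTop 0] with u hhu hu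
    have hhu : h u ≤ u := (le_abs_self _).trans (by simpa [abs_of_nonneg hu] using hhu)
    have := sum_measureReal_le_measureReal_biUnion_add (μ := μ) (A := fun i => {ω | u < X i ω})
      (fun i => measurableSet_lt measurable_const (hXm i)) Finset.univ
    simp only [Finset.mem_univ, Set.iUnion_true, ← setOf_lt_maxRV] at this
    refine this.trans (add_le_add_right (Finset.sum_le_sum fun p _ => ?_) _)
    exact measureReal_mono fun ω hω => ⟨by linarith [le_abs_self (X p.1 ω), hω.1.out], hω.2⟩
  have hSdivT : Tendsto (fun u => S u / T u) atTop (𝓝 1) := by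
    have hupper := (hDS1.tendsto_pairTail_div one_pos).const_add 1
    rw [add_zero] at hupper
    refine tendsto_of_tendsto_of_tendsto_of_le_of_le' tendsto_const_nhds hupper
      (.of_forall fun u => (one_le_div (hT u)).mpr (hTS u)) ?_
    filter_upwards [hST] with u hu
    rw [one_add_div (hT u).ne']
    exact div_le_div_of_nonneg_right hu (hT u).le
  simpa using hSdivT.inv₀ one_ne_zero

end PairTail

theorem tendstoUniformlyOn_of_le_of_le {ι : Type*} {F : ℝ → ι → ℝ} {K : Set ι} {s : ι → ℝ}
    {b ℓ : ℝ} {L U : ℝ → ℝ} (hs : ∀ c ∈ K, s c ∈ Set.Ioc 0 b) (hL : Tendsto L atTop (𝓝 ℓ))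
    (hU : Tendsto U atTop (𝓝 ℓ))
    (hLU : ∀ᶠ u in atTop, ∀ c ∈ K, L u ≤ F (s c * u) c ∧ F (s c * u) c ≤ U u) :
    TendstoUniformlyOn F (fun _ => ℓ) atTop K := by
  rw [Metric.tendstoUniformlyOn_iff]
  intro ε hε
  obtain ⟨u₀, hu₀⟩ := eventually_atTop.mp <| hLU.and <|
    (Metric.tendsto_nhds.mp hL ε hε).and (Metric.tendsto_nhds.mp hU ε hε)
  filter_upwards [eventually_ge_atTop (b * max u₀ 0)] with x hx c hc
  obtain ⟨hsc, hsb⟩ := hs c hc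
  have hb := hsc.trans_le hsb
  have hx0 : 0 ≤ x := (mul_nonneg hb.le (le_max_right _ _)).trans hx
  have hxu : u₀ ≤ x / s c := calc
    u₀ ≤ max u₀ 0 := le_max_left _ _
    _ ≤ x / b := (le_div_iff₀' hb).mpr hx
    _ ≤ x / s c := div_le_div_of_nonneg_left hx0 hsc hsb
  obtain ⟨hLU, hLε, hUε⟩ := hu₀ _ hxu
  obtain ⟨hlow, hup⟩ := hLU c hc
  rw [mul_div_cancel₀ x hsc.ne'] at hlow hup
  rw [Real.dist_eq, abs_sub_lt_iff] at hLε hUε ⊢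
  constructor <;> linarith

section MaxSum

variable {Ω : Type*} [MeasurableSpace Ω] {μ : Measure Ω} [IsFiniteMeasure μ] {n : ℕ} [NeZero n]
  {X : Fin n → Ω → ℝ} {c : Fin n → ℝ} {a b d u β : ℝ}

theorem tailP_sum_mul_ordDesc_le (ha : 0 < a) (hc0 : c 0 ∈ Set.Icc a b) (hd : 0 ≤ d)
    (hc : ∀ i, i ≠ 0 → c i ∈ Set.Icc 0 d) (hu : 0 < u) (hβ : 0 ≤ β) :
    tailP μ (fun ω => ∑ i, c i * ordDesc X i ω) (c 0 * u) ≤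
      tailP μ (maxRV X) (u + -(n * d / a) * β) + pairTail μ X β (a / (b + n * d) * u) :=
  measureReal_le_add_pairTail fun ω hω =>
    (sub_lt_maxRV_or_exists_of_mul_lt_sum X ω ha hc0 hd hc hu hβ hω).imp_left
      fun h => show u + -(n * d / a) * β < maxRV X ω by linarith

theorem tailP_maxRV_le_tailP_sum_mul_ordDesc_add (ha : 0 < a) (hc0 : a ≤ c 0) (hd : 0 ≤ d)
    (hc : ∀ i, i ≠ 0 → c i ∈ Set.Icc 0 d) (hu : 0 ≤ u) (hβ : 0 ≤ β) :
    tailP μ (maxRV X) (u + n * d / a * β) ≤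
      tailP μ (fun ω => ∑ i, c i * ordDesc X i ω) (c 0 * u) + pairTail μ X β u :=
  measureReal_le_add_pairTail fun ω hω =>
    mul_lt_sum_or_exists_of_add_lt_maxRV X ω ha hc0 hd hc hu hβ hω

variable {h : ℝ → ℝ}

theorem DS1.tendstoUniformlyOn_tailP_sum_mul_ordDesc_div (hDS1 : DS1 μ X h) (hhD : DomVarFun h)
    (hh : ∀ᶠ x in atTop, 0 < h x) (hTD : DomVarFun (tailP μ (maxRV X)))
    (hT : ∀ x, 0 < tailP μ (maxRV X) x)
    (hhT : ∀ y, Tendsto (fun x => tailP μ (maxRV X) (x + y * h x) / tailP μ (maxRV X) x)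
      atTop (𝓝 1))
    (ha : 0 < a) (hab : a ≤ b) (hd : 0 ≤ d) :
    TendstoUniformlyOn
      (fun x (c : Fin n → ℝ) =>
        tailP μ (fun ω => ∑ i, c i * ordDesc X i ω) x / tailP μ (fun ω => c 0 * maxRV X ω) x)
      1 atTop {c | c 0 ∈ Set.Icc a b ∧ ∀ i, i ≠ 0 → c i ∈ Set.Icc 0 d} := by
  set D := n * d / a
  set κ := a / (b + n * d)
  have hκ : 0 < κ := div_pos ha (by have := ha.trans_le hab; positivity)
  refine tendstoUniformlyOn_of_le_of_le (s := fun c => c 0) (ℓ := 1)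
    (L := fun u => tailP μ (maxRV X) (u + D * h u) / tailP μ (maxRV X) u -
      pairTail μ X (1 * h u) u / tailP μ (maxRV X) u)
    (U := fun u => tailP μ (maxRV X) (u + -D * h u) / tailP μ (maxRV X) u +
      pairTail μ X (h u) (κ * u) / tailP μ (maxRV X) u)
    (fun c hc => ⟨ha.trans_le hc.1.1, hc.1.2⟩) ?_ ?_ ?_
  · simpa using (hhT D).sub (hDS1.tendsto_pairTail_div one_pos)
  · simpa using (hhT (-D)).add (hDS1.tendsto_pairTail_const_mul_div hhD hh hTD hT hκ)
  filter_upwards [eventually_gt_atTop 0, hh] with u hu hhu c ⟨hc0, hc⟩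
  rw [tailP_const_mul _ (ha.trans_le hc0.1), div_sub_div_same, ← add_div,
    div_le_div_iff_of_pos_right (hT u), div_le_div_iff_of_pos_right (hT u), one_mul]
  exact ⟨sub_le_iff_le_add.mpr
      (tailP_maxRV_le_tailP_sum_mul_ordDesc_add ha hc0.1 hd hc hu.le hhu.le),
    tailP_sum_mul_ordDesc_le ha hc0 hd hc hu hhu.le⟩

theorem DS1.tendstoUniformlyOn_tailP_maxRV_div_sum (hDS1 : DS1 μ X h)
    (hXm : ∀ i, Measurable (X i)) (hT : ∀ x, 0 < tailP μ (maxRV X) x)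
    (hho : h =o[atTop] fun x : ℝ => x) {K : Set (Fin n → ℝ)} (hK : ∀ c ∈ K, c 0 ∈ Set.Ioc 0 b) :
    TendstoUniformlyOn
      (fun x (c : Fin n → ℝ) =>
        tailP μ (fun ω => c 0 * maxRV X ω) x / ∑ i, tailP μ (fun ω => c 0 * X i ω) x)
      1 atTop K := by
  have hlim := hDS1.tendsto_tailP_maxRV_div_sum hXm hT hho
  refine tendstoUniformlyOn_of_le_of_le hK hlim hlim (.of_forall fun u c hc => ?_)
  simp only [tailP_const_mul _ (hK c hc).1, le_refl, and_self]

end MaxSum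

/-- Theorem 3.1 under Assumption C. -/
theorem weighted_order_stats_tail_assumptionC
    {Ω : Type*} [MeasurableSpace Ω] (μ : Measure Ω) [IsProbabilityMeasure μ]
    {n : ℕ} [NeZero n] (X : Fin n → Ω → ℝ) (hXm : ∀ i, Measurable (X i))
    (hC : AssumptionC μ X)
    (a b d : ℝ) (ha : 0 < a) (hab : a ≤ b) (hd : 0 ≤ d) :
    UnifMaxSum μ X
      {c : Fin n → ℝ | c 0 ∈ Set.Icc a b ∧ ∀ i : Fin n, i ≠ 0 → c i ∈ Set.Icc 0 d} := by
  obtain ⟨⟨hT0, -⟩, hTD, h, hhD, ⟨hh, hho, hhT, -⟩, hDS1⟩ := hC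
  have hT := tailP_pos_of_forall_nonneg hT0
  exact ⟨hDS1.tendstoUniformlyOn_tailP_sum_mul_ordDesc_div hhD hh hTD hT hhT ha hab hd,
    hDS1.tendstoUniformlyOn_tailP_maxRV_div_sum hXm hT hho fun c hc =>
      ⟨ha.trans_le hc.1.1, hc.1.2⟩⟩
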